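/- arXiv:2208.08471 — 2 statements merged into one kernel-verified Lean document; each statement's English description precedes it below -/
import Mathlib

section
/- Let U, U₁, …, Uₙ be iid random variables uniformly distributed on (0,1) and let (θ₁,…,θₙ) be nonnegative weights summing to 1. Then for every p ∈ (0,1), ℙ((∑ᵢ θᵢ Uᵢ⁻¹)⁻¹ ≤ p) ≥ p = ℙ(U ≤ p); i.e., the weighted harmonic mean M₋₁(U₁,…,Uₙ) = (∑ᵢ θᵢ/Uᵢ)⁻¹ satisfies M₋₁(U₁,…,Uₙ) ≤_st U. -/
/-!
Every `1 / Uⱼ` is at least `1`, so `∑ θⱼ / Uⱼ ≥ 1 / p` as soon as a single `Uᵢ` falls below the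
threshold `qᵢ = θᵢ p / (1 - p + θᵢ p)`. By independence, the probability that no `Uᵢ` does is
`∏ (1 - qᵢ) = ∏ (1 + θᵢ p / (1 - p))⁻¹ ≤ (1 + p / (1 - p))⁻¹ = 1 - p`, using
`∏ (1 + aᵢ) ≥ 1 + ∑ aᵢ`.
-/

open MeasureTheory ProbabilityTheory Set

/-- `X` is a Pareto(α) random variable under `P`: `P(X > t) = t^{-α}` for `t ≥ 1`,
and `X ≥ 1` almost surely. -/
def IsPareto {Ω : Type*} [MeasurableSpace Ω] (P : Measure Ω) (X : Ω → ℝ) (α : ℝ) : Prop :=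
  Measurable X ∧ P {ω | 1 ≤ X ω} = 1 ∧
    ∀ t : ℝ, 1 ≤ t → P {ω | t < X ω} = ENNReal.ofReal (t ^ (-α))

/-- `U` is uniformly distributed on `(0,1)` under `P`. -/
def IsUniform01 {Ω : Type*} [MeasurableSpace Ω] (P : Measure Ω) (U : Ω → ℝ) : Prop :=
  Measurable U ∧ Measure.map U P = volume.restrict (Set.Ioo (0:ℝ) 1)

theorem Finset.one_add_sum_le_prod_one_add {ι R : Type*} [CommSemiring R] [PartialOrder R]
    [IsOrderedRing R] (s : Finset ι) {a : ι → R} (ha : ∀ i ∈ s, 0 ≤ a i) :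
    1 + ∑ i ∈ s, a i ≤ ∏ i ∈ s, (1 + a i) := by
  classical
  induction s using Finset.induction_on with
  | empty => simp
  | insert j s hj ih =>
    rw [Finset.sum_insert hj, Finset.prod_insert hj]
    have hs : ∀ i ∈ s, 0 ≤ a i := fun i hi => ha i (Finset.mem_insert_of_mem hi)
    have haj : 0 ≤ a j := ha j (Finset.mem_insert_self j s)
    have hprod : 1 ≤ ∏ i ∈ s, (1 + a i) :=
      Finset.one_le_prod fun i hi => le_add_of_nonneg_right (hs i hi)
    calc 1 + (a j + ∑ i ∈ s, a i) = (1 + ∑ i ∈ s, a i) + a j * 1 := by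
          rw [mul_one, add_comm (a j), add_assoc]
      _ ≤ ∏ i ∈ s, (1 + a i) + a j * ∏ i ∈ s, (1 + a i) := by gcongr; exact ih hs
      _ = (1 + a j) * ∏ i ∈ s, (1 + a i) := by rw [add_mul, one_mul]

theorem Finset.prod_inv_one_add_le {ι : Type*} (s : Finset ι) {a : ι → ℝ}
    (ha : ∀ i ∈ s, 0 ≤ a i) : ∏ i ∈ s, (1 + a i)⁻¹ ≤ (1 + ∑ i ∈ s, a i)⁻¹ := by
  have hsum : 0 ≤ ∑ i ∈ s, a i := Finset.sum_nonneg ha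
  rw [Finset.prod_inv_distrib]
  exact inv_anti₀ (by positivity) (s.one_add_sum_le_prod_one_add ha)

theorem volume_restrict_Ioo_zero_one_Ioi {q : ℝ} (hq0 : 0 ≤ q) :
    volume.restrict (Ioo (0 : ℝ) 1) (Ioi q) = ENNReal.ofReal (1 - q) := by
  rw [Measure.restrict_apply measurableSet_Ioi, Ioi_inter_Ioo, max_eq_left hq0, Real.volume_Ioo]

namespace IsUniform01

variable {Ω : Type*} [MeasurableSpace Ω] {P : Measure Ω} {U : Ω → ℝ}

theorem measure_lt (hU : IsUniform01 P U) {q : ℝ} (hq0 : 0 ≤ q) :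
    P {ω | q < U ω} = ENNReal.ofReal (1 - q) := by
  rw [← volume_restrict_Ioo_zero_one_Ioi hq0, ← hU.2, Measure.map_apply hU.1 measurableSet_Ioi]
  rfl

theorem ae_mem_Ioo (hU : IsUniform01 P U) : ∀ᵐ ω ∂P, U ω ∈ Ioo 0 1 :=
  ae_of_ae_map hU.1.aemeasurable (hU.2 ▸ ae_restrict_mem measurableSet_Ioo)

end IsUniform01

theorem one_add_mul_inv_sub_one_le_sum_mul_inv {ι : Type*} (s : Finset ι) {θ u : ι → ℝ}
    (hθ : ∀ j ∈ s, 0 ≤ θ j) (hsum : ∑ j ∈ s, θ j = 1) (hu : ∀ j ∈ s, u j ∈ Ioc 0 1)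
    {i : ι} (hi : i ∈ s) :
    1 + θ i * ((u i)⁻¹ - 1) ≤ ∑ j ∈ s, θ j * (u j)⁻¹ := by
  have hterm : ∀ j ∈ s, 0 ≤ θ j * ((u j)⁻¹ - 1) := fun j hj =>
    mul_nonneg (hθ j hj) (sub_nonneg.2 (one_le_inv₀ (hu j hj).1 |>.2 (hu j hj).2))
  calc 1 + θ i * ((u i)⁻¹ - 1) ≤ 1 + ∑ j ∈ s, θ j * ((u j)⁻¹ - 1) := by
        gcongr; exact Finset.single_le_sum hterm hi
    _ = ∑ j ∈ s, θ j * (u j)⁻¹ := by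
        simp only [mul_sub, mul_one, Finset.sum_sub_distrib, hsum]; ring

noncomputable def harmonicThreshold (p θ : ℝ) : ℝ := θ * p / (1 - p + θ * p)

theorem harmonicThreshold_nonneg {p θ : ℝ} (hp1 : p < 1) (hθp : 0 ≤ θ * p) :
    0 ≤ harmonicThreshold p θ :=
  div_nonneg hθp (by linarith)

theorem one_sub_harmonicThreshold {p θ : ℝ} (hp1 : p < 1) (hθp : 0 ≤ θ * p) :
    1 - harmonicThreshold p θ = (1 + θ * p / (1 - p))⁻¹ := by
  have : 0 < 1 - p := sub_pos.2 hp1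
  rw [harmonicThreshold]
  field_simp
  ring

theorem inv_le_one_add_mul_inv_sub_one_of_le_harmonicThreshold {p θ u : ℝ} (hp0 : 0 < p)
    (hp1 : p < 1) (hθ : 0 ≤ θ) (hu : 0 < u) (hle : u ≤ harmonicThreshold p θ) :
    p⁻¹ ≤ 1 + θ * (u⁻¹ - 1) := by
  have hle' : u * (1 - p) ≤ θ * p * (1 - u) := by
    have : 0 < 1 - p + θ * p := by nlinarith
    rw [harmonicThreshold, le_div_iff₀ this] at hle
    linarith
  have hdiff : 1 + θ * (u⁻¹ - 1) - p⁻¹ = (θ * p * (1 - u) - u * (1 - p)) / (p * u) := by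
    field_simp
    ring
  have : 0 ≤ 1 + θ * (u⁻¹ - 1) - p⁻¹ := by
    rw [hdiff]
    exact div_nonneg (sub_nonneg.2 hle') (by positivity)
  linarith

section IndependentUniforms

variable {Ω ι : Type*} [MeasurableSpace Ω] {P : Measure Ω} [Fintype ι] {U : ι → Ω → ℝ}
  {θ : ι → ℝ} {p : ℝ}

theorem measure_iInter_harmonicThreshold_lt_le (hU : ∀ i, IsUniform01 P (U i))
    (hind : iIndepFun U P) (hθ : ∀ i, 0 ≤ θ i) (hsum : ∑ i, θ i = 1) (hp0 : 0 < p) (hp1 : p < 1) :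
    P (⋂ i, {ω | harmonicThreshold p (θ i) < U i ω}) ≤ ENNReal.ofReal (1 - p) := by
  have hθp : ∀ i, 0 ≤ θ i * p := fun i => mul_nonneg (hθ i) hp0.le
  have ha : ∀ i, 0 ≤ θ i * p / (1 - p) := fun i => div_nonneg (hθp i) (sub_pos.2 hp1).le
  calc P (⋂ i, {ω | harmonicThreshold p (θ i) < U i ω})
      = ∏ i, P {ω | harmonicThreshold p (θ i) < U i ω} :=
        hind.meas_iInter fun i => ⟨Ioi _, measurableSet_Ioi, rfl⟩
    _ = ∏ i, ENNReal.ofReal (1 + θ i * p / (1 - p))⁻¹ := by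
        refine Finset.prod_congr rfl fun i _ => ?_
        rw [(hU i).measure_lt (harmonicThreshold_nonneg hp1 (hθp i)),
          one_sub_harmonicThreshold hp1 (hθp i)]
    _ = ENNReal.ofReal (∏ i, (1 + θ i * p / (1 - p))⁻¹) :=
        (ENNReal.ofReal_prod_of_nonneg fun i _ => by have := ha i; positivity).symm
    _ ≤ ENNReal.ofReal (1 + ∑ i, θ i * p / (1 - p))⁻¹ :=
        ENNReal.ofReal_le_ofReal (Finset.univ.prod_inv_one_add_le fun i _ => ha i)
    _ = ENNReal.ofReal (1 - p) := by
        have : 1 - p ≠ 0 := (sub_pos.2 hp1).ne'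
        rw [← Finset.sum_div, ← Finset.sum_mul, hsum]
        congr 1
        field_simp
        ring

theorem compl_iInter_harmonicThreshold_lt_ae_le (hU : ∀ i, IsUniform01 P (U i))
    (hθ : ∀ i, 0 ≤ θ i) (hsum : ∑ i, θ i = 1) (hp0 : 0 < p) (hp1 : p < 1) :
    (⋂ i, {ω | harmonicThreshold p (θ i) < U i ω})ᶜ
      ≤ᵐ[P] {ω | (∑ i, θ i * (U i ω)⁻¹)⁻¹ ≤ p} := by
  filter_upwards [ae_all_iff.2 fun i => (hU i).ae_mem_Ioo] with ω hω hω_below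
  obtain ⟨i, hi⟩ : ∃ i, U i ω ≤ harmonicThreshold p (θ i) := by
    change ω ∉ ⋂ i, _ at hω_below
    simpa only [mem_iInter, mem_ofPred_eq, not_forall, not_lt] using hω_below
  show _ ≤ p
  exact inv_le_of_inv_le₀ hp0 <|
    (inv_le_one_add_mul_inv_sub_one_of_le_harmonicThreshold hp0 hp1 (hθ i) (hω i).1 hi).trans
    (one_add_mul_inv_sub_one_le_sum_mul_inv Finset.univ (fun j _ => hθ j) hsum
      (fun j _ => Ioo_subset_Ioc_self (hω j)) (Finset.mem_univ i))

end IndependentUniforms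

/-- For iid uniform(0,1) random variables `U₁,…,Uₙ` and nonnegative weights summing to 1,
the weighted harmonic mean `(∑ θᵢ/Uᵢ)⁻¹` is first-order stochastically dominated by a
uniform(0,1) variable: `P((∑ θᵢ/Uᵢ)⁻¹ ≤ p) ≥ p` for all `p ∈ (0,1)`. -/
theorem stmt1 {Ω : Type*} [MeasurableSpace Ω] (P : Measure Ω) [IsProbabilityMeasure P]
    (n : ℕ) (U : Fin n → Ω → ℝ) (hU : ∀ i, IsUniform01 P (U i))
    (hind : iIndepFun U P)
    (θ : Fin n → ℝ) (hθ : ∀ i, 0 ≤ θ i) (hsum : ∑ i, θ i = 1) :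
    ∀ p ∈ Set.Ioo (0:ℝ) 1,
      ENNReal.ofReal p ≤ P {ω | (∑ i, θ i * (U i ω)⁻¹)⁻¹ ≤ p} := by
  rintro p ⟨hp0, hp1⟩
  set B : Set Ω := ⋂ i, {ω | harmonicThreshold p (θ i) < U i ω}
  have hB_meas : MeasurableSet B :=
    MeasurableSet.iInter fun i => measurableSet_lt measurable_const (hU i).1
  calc ENNReal.ofReal p = 1 - ENNReal.ofReal (1 - p) := by
        rw [← ENNReal.ofReal_one, ← ENNReal.ofReal_sub _ (sub_pos.2 hp1).le, sub_sub_cancel]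
    _ ≤ 1 - P B :=
        tsub_le_tsub_left (measure_iInter_harmonicThreshold_lt_le hU hind hθ hsum hp0 hp1) 1
    _ = P Bᶜ := (prob_compl_eq_one_sub hB_meas).symm
    _ ≤ _ := measure_mono_ae (compl_iInter_harmonicThreshold_lt_ae_le hU hθ hsum hp0 hp1)
end

section
/- Let X₁, …, Xₙ be iid Pareto(α) random variables with α ∈ (0,1], and let (θ₁,…,θₙ) be nonnegative weights summing to 1 with at least two of the θᵢ strictly positive. Then for every t > 1, ℙ(∑ᵢ θᵢ Xᵢ > t) > ℙ(X₁ > t) = t^{-α}; i.e., the stochastic dominance of the weighted average over a single Pareto loss is strict on (1,∞). -/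
/-!
Put `u = t - 1`. Since every `Xₖ ≥ 1` almost surely, the weighted sum exceeds `1 + u` as soon as a
single `Xᵢ` with `θᵢ > 0` exceeds `(θᵢ + u) / θᵢ`, so by independence
`P(∑ θᵢ Xᵢ ≤ t) ≤ ∏_{θᵢ > 0} g(θᵢ)` with `g(a) = 1 - (a / (a + u))^α`.
Concavity of `x ↦ x^α` gives `(s + t - st)^α + (st)^α ≤ s^α + t^α` on `[0, 1]`, which makes `g`
strictly supermultiplicative: `g(a) g(b) < g(a + b)`. With two positive weights the product is
therefore `< g(1) = 1 - t^{-α}`.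
-/

open MeasureTheory ProbabilityTheory Set

theorem ConcaveOn.add_le_add_of_mem_Icc {D : Set ℝ} {f : ℝ → ℝ} (hf : ConcaveOn ℝ D f)
    {x y a b : ℝ} (hx : x ∈ D) (hy : y ∈ D) (ha : a ∈ Icc x y) (hb : b ∈ Icc x y)
    (hab : a + b = x + y) : f x + f y ≤ f a + f b := by
  rcases (ha.1.trans ha.2).eq_or_lt with rfl | hxy
  · obtain rfl : a = x := le_antisymm ha.2 ha.1
    obtain rfl : b = a := le_antisymm hb.2 hb.1
    rfl
  set l := (y - a) / (y - x)
  have hl0 : 0 ≤ l := div_nonneg (by linarith [ha.2]) (by linarith)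
  have hl1 : 0 ≤ 1 - l := by
    rw [sub_nonneg, div_le_one (by linarith)]; linarith [ha.1]
  have ea : l * x + (1 - l) * y = a := by
    simp only [l]; field_simp; ring
  have eb : (1 - l) * x + l * y = b := by linear_combination -hab - ea
  have h1 := hf.2 hx hy hl0 hl1 (by ring)
  have h2 := hf.2 hx hy hl1 hl0 (by ring)
  simp only [smul_eq_mul, ea, eb] at h1 h2
  linarith

theorem Real.rpow_add_sub_mul_add_rpow_mul_le {α s t : ℝ} (hα0 : 0 ≤ α) (hα1 : α ≤ 1)
    (hs : s ∈ Icc (0 : ℝ) 1) (ht : t ∈ Icc (0 : ℝ) 1) :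
    (s + t - s * t) ^ α + (s * t) ^ α ≤ s ^ α + t ^ α := by
  obtain ⟨hs0, hs1⟩ := hs
  obtain ⟨ht0, ht1⟩ := ht
  rw [add_comm]
  refine (Real.concaveOn_rpow hα0 hα1).add_le_add_of_mem_Icc (mem_Ici.2 (by positivity))
    (mem_Ici.2 (by nlinarith)) ⟨?_, ?_⟩ ⟨?_, ?_⟩ (by ring) <;> nlinarith

theorem one_sub_rpow_mul_one_sub_rpow_lt {α u a b : ℝ} (hα0 : 0 < α) (hα1 : α ≤ 1)
    (hu : 0 < u) (ha : 0 < a) (hb : 0 < b) :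
    (1 - (a / (a + u)) ^ α) * (1 - (b / (b + u)) ^ α) < 1 - ((a + b) / (a + b + u)) ^ α := by
  set s := a / (a + u)
  set t := b / (b + u)
  have hs : s ∈ Icc (0 : ℝ) 1 := ⟨by positivity, (div_le_one (by linarith)).2 (by linarith)⟩
  have ht : t ∈ Icc (0 : ℝ) 1 := ⟨by positivity, (div_le_one (by linarith)).2 (by linarith)⟩
  have hlt : (a + b) / (a + b + u) < s + t - s * t := by
    have hgap : s + t - s * t - (a + b) / (a + b + u) =
        u * a * b / ((a + u) * (b + u) * (a + b + u)) := by
      simp only [s, t]; field_simp; ring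
    have : 0 < u * a * b / ((a + u) * (b + u) * (a + b + u)) := by positivity
    linarith
  calc (1 - s ^ α) * (1 - t ^ α) = 1 - (s ^ α + t ^ α - (s * t) ^ α) := by
        rw [Real.mul_rpow hs.1 ht.1]; ring
    _ ≤ 1 - (s + t - s * t) ^ α := by
        linarith [Real.rpow_add_sub_mul_add_rpow_mul_le hα0.le hα1 hs ht]
    _ < 1 - ((a + b) / (a + b + u)) ^ α := by
        gcongr

theorem one_sub_rpow_div_add_nonneg {α u a : ℝ} (hα : 0 ≤ α) (ha : 0 ≤ a) (hu : 0 ≤ u) :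
    0 ≤ 1 - (a / (a + u)) ^ α :=
  sub_nonneg.2 <|
    Real.rpow_le_one (by positivity) (div_le_one_of_le₀ (by linarith) (by positivity)) hα

section SuperMultiplicative

variable {ι : Type*} {g : ℝ → ℝ} {θ : ι → ℝ}

theorem Finset.prod_le_apply_sum_of_mul_le (hg0 : ∀ x, 0 < x → 0 ≤ g x)
    (hg : ∀ a b, 0 < a → 0 < b → g a * g b ≤ g (a + b)) {s : Finset ι} (hs : s.Nonempty)
    (hθ : ∀ i ∈ s, 0 < θ i) : ∏ i ∈ s, g (θ i) ≤ g (∑ i ∈ s, θ i) := by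
  induction hs using Finset.Nonempty.cons_induction with
  | singleton i => simp
  | cons i s hi hs ih =>
    rw [Finset.forall_mem_cons] at hθ
    rw [Finset.prod_cons, Finset.sum_cons]
    calc g (θ i) * ∏ j ∈ s, g (θ j) ≤ g (θ i) * g (∑ j ∈ s, θ j) :=
          mul_le_mul_of_nonneg_left (ih hθ.2) (hg0 _ hθ.1)
      _ ≤ g (θ i + ∑ j ∈ s, θ j) := hg _ _ hθ.1 (Finset.sum_pos hθ.2 hs)

theorem Finset.prod_lt_apply_sum_of_mul_lt (hg0 : ∀ x, 0 < x → 0 ≤ g x)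
    (hg : ∀ a b, 0 < a → 0 < b → g a * g b < g (a + b)) {s : Finset ι} (hs : 1 < s.card)
    (hθ : ∀ i ∈ s, 0 < θ i) : ∏ i ∈ s, g (θ i) < g (∑ i ∈ s, θ i) := by
  classical
  obtain ⟨i, hi⟩ : s.Nonempty := Finset.card_pos.1 (by omega)
  have hrest : (s.erase i).Nonempty := by
    rw [← Finset.card_pos, Finset.card_erase_of_mem hi]; omega
  have hθrest : ∀ j ∈ s.erase i, 0 < θ j := fun j hj => hθ j (Finset.mem_of_mem_erase hj)
  rw [← Finset.mul_prod_erase s _ hi, ← Finset.add_sum_erase s θ hi]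
  calc g (θ i) * ∏ j ∈ s.erase i, g (θ j) ≤ g (θ i) * g (∑ j ∈ s.erase i, θ j) :=
        mul_le_mul_of_nonneg_left
          (Finset.prod_le_apply_sum_of_mul_le hg0 (fun a b ha hb => (hg a b ha hb).le) hrest
            hθrest) (hg0 _ (hθ i hi))
    _ < g (θ i + ∑ j ∈ s.erase i, θ j) := hg _ _ (hθ i hi) (Finset.sum_pos hθrest hrest)

end SuperMultiplicative

theorem prod_one_sub_rpow_div_add_lt {ι : Type*} {α u : ℝ} (hα0 : 0 < α) (hα1 : α ≤ 1)
    (hu : 0 < u) {s : Finset ι} {θ : ι → ℝ} (hθ : ∀ i ∈ s, 0 < θ i) (hsum : ∑ i ∈ s, θ i = 1)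
    (hs : 1 < s.card) : ∏ i ∈ s, (1 - (θ i / (θ i + u)) ^ α) < 1 - (1 + u) ^ (-α) := by
  have h := Finset.prod_lt_apply_sum_of_mul_lt (g := fun a => 1 - (a / (a + u)) ^ α)
    (fun a ha => one_sub_rpow_div_add_nonneg hα0.le ha.le hu.le)
    (fun a b ha hb => one_sub_rpow_mul_one_sub_rpow_lt hα0 hα1 hu ha hb) hs hθ
  rwa [hsum, one_div, Real.inv_rpow (by positivity), ← Real.rpow_neg (by positivity)] at h

theorem mul_sub_one_le_of_sum_mul_le {ι : Type*} [Fintype ι] {θ x : ι → ℝ} {u : ℝ}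
    (hθ : ∀ k, 0 ≤ θ k) (hsum : ∑ k, θ k = 1) (hx : ∀ k, 1 ≤ x k)
    (h : ∑ k, θ k * x k ≤ 1 + u) (i : ι) : θ i * (x i - 1) ≤ u := by
  have hsplit : ∑ k, θ k * x k = 1 + ∑ k, θ k * (x k - 1) := by
    simp only [mul_sub, mul_one, Finset.sum_sub_distrib, hsum]; ring
  have hi : θ i * (x i - 1) ≤ ∑ k, θ k * (x k - 1) :=
    Finset.single_le_sum (fun k _ => mul_nonneg (hθ k) (sub_nonneg.2 (hx k)))
      (Finset.mem_univ i)
  linarith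

namespace IsPareto

variable {Ω : Type*} [MeasurableSpace Ω] {P : Measure Ω} [IsProbabilityMeasure P] {X : Ω → ℝ}
  {α : ℝ}

theorem ae_one_le (hX : IsPareto P X α) : ∀ᵐ ω ∂P, 1 ≤ X ω :=
  (prob_compl_eq_zero_iff (hX.1 measurableSet_Ici)).2 hX.2.1

theorem measure_le_inv (hX : IsPareto P X α) {c : ℝ} (hc0 : 0 < c) (hc1 : c ≤ 1) :
    P {ω | X ω ≤ c⁻¹} = ENNReal.ofReal (1 - c ^ α) := by
  have hcompl : {ω | X ω ≤ c⁻¹} = {ω | c⁻¹ < X ω}ᶜ := by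
    ext ω; simp
  rw [hcompl, prob_compl_eq_one_sub (measurableSet_lt measurable_const hX.1),
    hX.2.2 _ ((one_le_inv₀ hc0).2 hc1), Real.rpow_neg (by positivity), Real.inv_rpow hc0.le,
    inv_inv, ENNReal.ofReal_sub _ (by positivity), ENNReal.ofReal_one]

end IsPareto

theorem measureReal_sum_mul_le_le_prod {Ω ι : Type*} [Fintype ι] [MeasurableSpace Ω]
    {P : Measure Ω} [IsProbabilityMeasure P] {α u : ℝ} {X : ι → Ω → ℝ}
    (hX : ∀ i, IsPareto P (X i) α) (hind : iIndepFun X P) {θ : ι → ℝ} (hθ : ∀ i, 0 ≤ θ i)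
    (hsum : ∑ i, θ i = 1) (hα : 0 ≤ α) (hu : 0 < u) :
    P.real {ω | ∑ i, θ i * X i ω ≤ 1 + u} ≤
      ∏ i ∈ Finset.univ.filter (0 < θ ·), (1 - (θ i / (θ i + u)) ^ α) := by
  set s := Finset.univ.filter (0 < θ ·)
  have hθs : ∀ i ∈ s, 0 < θ i := fun i hi => (Finset.mem_filter.1 hi).2
  have hnonneg : ∀ i ∈ s, 0 ≤ 1 - (θ i / (θ i + u)) ^ α :=
    fun i hi => one_sub_rpow_div_add_nonneg hα (hθs i hi).le hu.le
  refine ENNReal.toReal_le_of_le_ofReal (Finset.prod_nonneg hnonneg) ?_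
  calc P {ω | ∑ i, θ i * X i ω ≤ 1 + u}
      ≤ P (⋂ i ∈ s, X i ⁻¹' Iic (θ i / (θ i + u))⁻¹) := by
        refine measure_mono_ae ?_
        filter_upwards [ae_all_iff.2 fun k => (hX k).ae_one_le] with ω hω hle
        refine mem_iInter₂.2 fun i hi => ?_
        have := mul_sub_one_le_of_sum_mul_le hθ hsum hω hle i
        rw [mem_preimage, mem_Iic, inv_div, le_div_iff₀ (hθs i hi)]
        linarith
    _ = ∏ i ∈ s, ENNReal.ofReal (1 - (θ i / (θ i + u)) ^ α) := by
        rw [hind.measure_inter_preimage_eq_mul s (fun _ _ => measurableSet_Iic)]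
        exact Finset.prod_congr rfl fun i hi => (hX i).measure_le_inv
          (by positivity [hθs i hi]) ((div_le_one (by linarith [hθs i hi])).2 (by linarith))
    _ = ENNReal.ofReal (∏ i ∈ s, (1 - (θ i / (θ i + u)) ^ α)) :=
        (ENNReal.ofReal_prod_of_nonneg hnonneg).symm

theorem ofReal_lt_measure_lt_of_measureReal_le_lt {Ω : Type*} [MeasurableSpace Ω]
    {P : Measure Ω} [IsProbabilityMeasure P] {f : Ω → ℝ} (hf : Measurable f) {a t : ℝ}
    (ha : 0 ≤ a) (h : P.real {ω | f ω ≤ t} < 1 - a) : ENNReal.ofReal a < P {ω | t < f ω} := by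
  have hcompl : {ω | t < f ω} = {ω | f ω ≤ t}ᶜ := by
    ext ω; simp
  rw [ENNReal.ofReal_lt_iff_lt_toReal ha (measure_ne_top _ _), ← measureReal_def, hcompl,
    probReal_compl_eq_one_sub (measurableSet_le hf measurable_const)]
  linarith

/-- Strictness: for iid Pareto(α), `α ∈ (0,1]`, weights in the simplex with at least two
strictly positive components, `P(∑ θᵢ Xᵢ > t) > t^{-α} = P(X₁ > t)` for every `t > 1`. -/
theorem stmt3 {Ω : Type*} [MeasurableSpace Ω] (P : Measure Ω) [IsProbabilityMeasure P]
    (n : ℕ) (α : ℝ) (hα : α ∈ Set.Ioc (0:ℝ) 1)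
    (X : Fin n → Ω → ℝ) (hX : ∀ i, IsPareto P (X i) α)
    (hind : iIndepFun X P)
    (θ : Fin n → ℝ) (hθ : ∀ i, 0 ≤ θ i) (hsum : ∑ i, θ i = 1)
    (htwo : ∃ i j, i ≠ j ∧ 0 < θ i ∧ 0 < θ j) :
    ∀ t : ℝ, 1 < t →
      ENNReal.ofReal (t ^ (-α)) < P {ω | t < ∑ i, θ i * X i ω} := by
  obtain ⟨hα0, hα1⟩ := hα
  intro t ht
  obtain ⟨u, hu, rfl⟩ : ∃ u, 0 < u ∧ 1 + u = t := ⟨t - 1, by linarith, by ring⟩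
  set s := Finset.univ.filter (0 < θ ·)
  have hsum_s : ∑ i ∈ s, θ i = 1 :=
    (Finset.sum_filter_of_ne fun i _ h => (hθ i).lt_of_ne h.symm).trans hsum
  have hcard : 1 < s.card := by
    obtain ⟨i, j, hij, hi, hj⟩ := htwo
    exact Finset.one_lt_card.2 ⟨i, by simpa [s], j, by simpa [s], hij⟩
  refine ofReal_lt_measure_lt_of_measureReal_le_lt
    (Finset.measurable_sum _ fun i _ => (hX i).1.const_mul _) (by positivity) ?_
  calc P.real {ω | ∑ i, θ i * X i ω ≤ 1 + u}
      ≤ ∏ i ∈ s, (1 - (θ i / (θ i + u)) ^ α) :=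
        measureReal_sum_mul_le_le_prod hX hind hθ hsum hα0.le hu
    _ < 1 - (1 + u) ^ (-α) :=
        prod_one_sub_rpow_div_add_lt hα0 hα1 hu (fun i hi => (Finset.mem_filter.1 hi).2) hsum_s
          hcard
end
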